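/- The set of geodesic words for B_3 with respect to the generating set {a, b, a⁻¹, b⁻¹} is a regular language. -/

import Mathlib

def B3Rel : Set (FreeGroup Bool) :=
  {FreeGroup.of true * FreeGroup.of false * FreeGroup.of true *
    (FreeGroup.of false * FreeGroup.of true * FreeGroup.of false)⁻¹}

abbrev B3 := PresentedGroup B3Rel

def ga : B3 := PresentedGroup.of true
def gb : B3 := PresentedGroup.of false

/-- generator by a boolean: `true ↦ a`, `false ↦ b`. -/
def gen (x : Bool) : B3 := if x then ga else gb

/-- A letter: first component is the generator (`true` = a), second the sign
(`true` = positive). -/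
abbrev Letter := Bool × Bool

def evalLetter (l : Letter) : B3 := if l.2 then gen l.1 else (gen l.1)⁻¹

def evalWord (w : List Letter) : B3 := (w.map evalLetter).prod

/-- `w` is geodesic: no shorter word represents the same element. -/
def IsGeodesic (w : List Letter) : Prop :=
  ∀ v : List Letter, evalWord v = evalWord w → w.length ≤ v.length

/-- `w` is freely reduced. -/
def Reduced (w : List Letter) : Prop :=
  w.Chain' fun x y => ¬ (x.1 = y.1 ∧ x.2 = !y.2)

def la : Letter := (true, true)
def lA : Letter := (true, false)
def lb : Letter := (false, true)
def lB : Letter := (false, false)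


namespace B3NF

inductive S : Type | a | b | ab | ba deriving DecidableEq

instance : Fintype S := ⟨{.a, .b, .ab, .ba}, by intro x; cases x <;> decide⟩

def τ : S → S | .a => .b | .b => .a | .ab => .ba | .ba => .ab

@[simp] lemma τ_τ (s : S) : τ (τ s) = s := by cases s <;> rfl

@[simp] lemma map_τ_τ (l : List S) : (l.map τ).map τ = l := by
  simp [List.map_map, Function.comp_def]

@[simp] lemma map_ττ (l : List S) : l.map (τ ∘ τ) = l := by
  simp [Function.comp_def]

abbrev Raw := ℤ × List S

def mA : Raw → Raw
  | (k, []) => (k, [.a])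
  | (k, .a :: t) => (k, .a :: .a :: t)
  | (k, .b :: t) => (k, .ba :: t)
  | (k, .ab :: t) => (k+1, t.map τ)
  | (k, .ba :: t) => (k, .a :: .ba :: t)

def mB : Raw → Raw
  | (k, []) => (k, [.b])
  | (k, .b :: t) => (k, .b :: .b :: t)
  | (k, .a :: t) => (k, .ab :: t)
  | (k, .ba :: t) => (k+1, t.map τ)
  | (k, .ab :: t) => (k, .b :: .ab :: t)

def mA' : Raw → Raw
  | (k, []) => (k-1, [.ab])
  | (k, .a :: t) => (k, t)
  | (k, .ba :: t) => (k, .b :: t)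
  | (k, .b :: t) => (k-1, .ab :: .a :: t.map τ)
  | (k, .ab :: t) => (k-1, .ab :: .ba :: t.map τ)

def mB' : Raw → Raw
  | (k, []) => (k-1, [.ba])
  | (k, .b :: t) => (k, t)
  | (k, .ab :: t) => (k, .a :: t)
  | (k, .a :: t) => (k-1, .ba :: .b :: t.map τ)
  | (k, .ba :: t) => (k-1, .ba :: .ab :: t.map τ)

/-- start letter of a simple, `true` = a -/
def st : S → Bool | .a => true | .b => false | .ab => true | .ba => false
/-- end letter of a simple -/
def en : S → Bool | .a => true | .b => false | .ab => false | .ba => true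

/-- validity of a (reversed-stored) list of simples -/
def Ok (l : List S) : Prop := l.Chain' (fun x y => st x = en y)

@[simp] lemma ok_nil : Ok [] := List.isChain_nil
@[simp] lemma ok_singleton (x : S) : Ok [x] := List.isChain_singleton x
lemma ok_cons {x y : S} {t : List S} : Ok (x :: y :: t) ↔ (st x = en y ∧ Ok (y :: t)) :=
  List.isChain_cons_cons

@[simp] lemma st_τ (s : S) : st (τ s) = !st s := by cases s <;> rfl
@[simp] lemma en_τ (s : S) : en (τ s) = !en s := by cases s <;> rfl

lemma ok_map_τ {l : List S} (h : Ok l) : Ok (l.map τ) := by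
  unfold Ok at *
  simp only [List.Chain'] at *
  rw [List.isChain_map]
  refine h.imp ?_
  intro x y hxy
  simp [hxy]

lemma ok_mA {n : Raw} (h : Ok n.2) : Ok (mA n).2 := by
  obtain ⟨k, l⟩ := n
  rcases l with _ | ⟨x, t⟩
  · simp [mA]
  · rcases x <;> rcases t with _ | ⟨y, t⟩ <;>
      simp_all [mA, ok_cons, st, en] <;> rcases y <;> simp_all [st, en] <;>
      simpa [τ] using ok_map_τ (show Ok _ from h)

lemma ok_mB {n : Raw} (h : Ok n.2) : Ok (mB n).2 := by
  obtain ⟨k, l⟩ := n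
  rcases l with _ | ⟨x, t⟩
  · simp [mB]
  · rcases x <;> rcases t with _ | ⟨y, t⟩ <;>
      simp_all [mB, ok_cons, st, en] <;> rcases y <;> simp_all [st, en] <;>
      simpa [τ] using ok_map_τ (show Ok _ from h)

lemma ok_mA' {n : Raw} (h : Ok n.2) : Ok (mA' n).2 := by
  obtain ⟨k, l⟩ := n
  rcases l with _ | ⟨x, t⟩
  · simp [mA']
  · rcases x <;> rcases t with _ | ⟨y, t⟩ <;>
      simp_all [mA', ok_cons, st, en] <;> rcases y <;>
      simp_all [st, en] <;>
      simpa [τ] using ok_map_τ (show Ok _ from h)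

lemma ok_mB' {n : Raw} (h : Ok n.2) : Ok (mB' n).2 := by
  obtain ⟨k, l⟩ := n
  rcases l with _ | ⟨x, t⟩
  · simp [mB']
  · rcases x <;> rcases t with _ | ⟨y, t⟩ <;>
      simp_all [mB', ok_cons, st, en] <;> rcases y <;>
      simp_all [st, en] <;>
      simpa [τ] using ok_map_τ (show Ok _ from h)

lemma mA'_mA {n : Raw} (h : Ok n.2) : mA' (mA n) = n := by
  obtain ⟨k, l⟩ := n
  rcases l with _ | ⟨x, _ | ⟨y, t⟩⟩
  · first | rfl | (simp [mA, mA', τ])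
  · cases x <;> first | rfl | (simp [mA, mA', τ])
  · rw [ok_cons] at h
    cases x <;> cases y <;>
      first
      | rfl
      | (exact absurd h.1 (by decide))
      | (simp [mA, mA', τ])

lemma mA_mA' {n : Raw} (h : Ok n.2) : mA (mA' n) = n := by
  obtain ⟨k, l⟩ := n
  rcases l with _ | ⟨x, _ | ⟨y, t⟩⟩
  · first | rfl | (simp [mA, mA', τ])
  · cases x <;> first | rfl | (simp [mA, mA', τ])
  · rw [ok_cons] at h
    cases x <;> cases y <;>
      first
      | rfl
      | (exact absurd h.1 (by decide))
      | (simp [mA, mA', τ])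

lemma mB'_mB {n : Raw} (h : Ok n.2) : mB' (mB n) = n := by
  obtain ⟨k, l⟩ := n
  rcases l with _ | ⟨x, _ | ⟨y, t⟩⟩
  · first | rfl | (simp [mB, mB', τ])
  · cases x <;> first | rfl | (simp [mB, mB', τ])
  · rw [ok_cons] at h
    cases x <;> cases y <;>
      first
      | rfl
      | (exact absurd h.1 (by decide))
      | (simp [mB, mB', τ])

lemma mB_mB' {n : Raw} (h : Ok n.2) : mB (mB' n) = n := by
  obtain ⟨k, l⟩ := n
  rcases l with _ | ⟨x, _ | ⟨y, t⟩⟩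
  · first | rfl | (simp [mB, mB', τ])
  · cases x <;> first | rfl | (simp [mB, mB', τ])
  · rw [ok_cons] at h
    cases x <;> cases y <;>
      first
      | rfl
      | (exact absurd h.1 (by decide))
      | (simp [mB, mB', τ])

lemma braid_m {n : Raw} (h : Ok n.2) : mA (mB (mA n)) = mB (mA (mB n)) := by
  obtain ⟨k, l⟩ := n
  rcases l with _ | ⟨x, _ | ⟨y, t⟩⟩
  · first | rfl | (simp [mA, mB, τ])
  · cases x <;> first | rfl | (simp [mA, mB, τ])
  · rw [ok_cons] at h
    cases x <;> cases y <;>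
      first
      | rfl
      | (exact absurd h.1 (by decide))
      | (simp [mA, mB, τ])



lemma braidF : ∀ r ∈ B3Rel, ∀ {G : Type} [Group G] (f : Bool → G),
    f true * f false * f true = f false * f true * f false → FreeGroup.lift f r = 1 := by
  rintro r hr G _ f h
  simp only [B3Rel, Set.mem_singleton_iff] at hr
  subst hr
  simp only [map_mul, map_inv, FreeGroup.lift_apply_of, h, mul_inv_eq_one]

lemma braid : ga * gb * ga = gb * ga * gb := by
  have h : PresentedGroup.mk B3Rel (FreeGroup.of true * FreeGroup.of false * FreeGroup.of true *
      (FreeGroup.of false * FreeGroup.of true * FreeGroup.of false)⁻¹) = 1 := by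
    apply (QuotientGroup.eq_one_iff _).mpr
    exact Subgroup.subset_normalClosure rfl
  simp only [map_mul, map_inv, mul_inv_eq_one] at h
  exact h

def Δ : B3 := ga * gb * ga

lemma Δb : Δ * gb = ga * Δ := by
  have : Δ * gb = ga * (gb * ga * gb) := by rw [Δ]; group
  rw [this, ← braid, Δ]

lemma Δa : Δ * ga = gb * Δ := by
  have : gb * Δ = (gb * ga * gb) * ga := by rw [Δ]; group
  rw [this, ← braid, Δ]

def sval : S → B3 | .a => ga | .b => gb | .ab => ga * gb | .ba => gb * ga

lemma Δτ (s : S) : Δ * sval (τ s) = sval s * Δ := by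
  cases s
  · exact Δb
  · exact Δa
  · show Δ * (gb * ga) = (ga * gb) * Δ
    rw [← mul_assoc, Δb, mul_assoc, Δa, ← mul_assoc]
  · show Δ * (ga * gb) = (gb * ga) * Δ
    rw [← mul_assoc, Δa, mul_assoc, Δb, ← mul_assoc]

def P : List S → B3
  | [] => 1
  | x :: t => P t * sval x

@[simp] lemma P_nil : P [] = 1 := rfl
@[simp] lemma P_cons (x t) : P (x :: t) = P t * sval x := rfl

lemma ΔPτ (l : List S) : Δ * P (l.map τ) = P l * Δ := by
  induction l with
  | nil => simp
  | cons x t ih =>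
    simp only [List.map_cons, P_cons, ← mul_assoc, ih]
    rw [mul_assoc, Δτ, ← mul_assoc]

def eB (n : Raw) : B3 := Δ ^ n.1 * P n.2

/-- the a↔b swapping automorphism -/
def σB : B3 →* B3 :=
  PresentedGroup.toGroup (f := fun x => if x then gb else ga)
    (fun r hr => braidF r hr _ (by simpa using braid.symm))

@[simp] lemma σB_ga : σB ga = gb := PresentedGroup.toGroup.of _
@[simp] lemma σB_gb : σB gb = ga := PresentedGroup.toGroup.of _

lemma σB_Δ : σB Δ = Δ := by
  simp [Δ, map_mul, braid]

lemma σB_sval (s : S) : σB (sval s) = sval (τ s) := by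
  cases s <;> simp [sval, τ, map_mul]

lemma σB_P (l : List S) : σB (P l) = P (l.map τ) := by
  induction l with
  | nil => simp
  | cons x t ih => simp [map_mul, ih, σB_sval]

lemma σB_eB (n : Raw) : σB (eB n) = eB (n.1, n.2.map τ) := by
  simp [eB, map_mul, map_zpow, σB_Δ, σB_P]

def M : Raw → Raw := fun n => (n.1, n.2.map τ)

lemma mB_eq (n : Raw) : mB n = M (mA (M n)) := by
  obtain ⟨k, l⟩ := n
  rcases l with _ | ⟨x, t⟩
  · rfl
  · cases x <;> simp [mA, mB, M, τ]

lemma mB'_eq (n : Raw) : mB' n = M (mA' (M n)) := by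
  obtain ⟨k, l⟩ := n
  rcases l with _ | ⟨x, t⟩
  · rfl
  · cases x <;> simp [mA', mB', M, τ]

lemma eB_mA (n : Raw) : eB (mA n) = eB n * ga := by
  obtain ⟨k, l⟩ := n
  rcases l with _ | ⟨x, t⟩
  · simp [mA, eB, sval, mul_assoc]
  · cases x
    · simp [mA, eB, sval, mul_assoc]
    · simp [mA, eB, sval, mul_assoc]
    · -- carry
      show Δ ^ (k+1) * P (t.map τ) = Δ ^ k * (P t * (ga * gb)) * ga
      rw [zpow_add_one, mul_assoc, ΔPτ, Δ]
      group
    · simp [mA, eB, sval, mul_assoc]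

lemma eB_mB (n : Raw) : eB (mB n) = eB n * gb := by
  have h := congrArg σB (eB_mA (M n))
  rw [map_mul, σB_eB, σB_ga, σB_eB] at h
  simpa [mB_eq, M, eB] using h

lemma eB_mA' {n : Raw} (h : Ok n.2) : eB (mA' n) = eB n * ga⁻¹ := by
  have h2 := eB_mA (mA' n)
  rw [mA_mA' h] at h2
  rw [h2]; group

lemma eB_mB' {n : Raw} (h : Ok n.2) : eB (mB' n) = eB n * gb⁻¹ := by
  have h2 := eB_mB (mB' n)
  rw [mB_mB' h] at h2
  rw [h2]; group

def mulL (x : Letter) (n : Raw) : Raw :=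
  match x with
  | (true, true) => mA n
  | (false, true) => mB n
  | (true, false) => mA' n
  | (false, false) => mB' n

lemma ok_mulL (x : Letter) {n : Raw} (h : Ok n.2) : Ok (mulL x n).2 := by
  rcases x with ⟨g, s⟩
  cases g <;> cases s <;> [exact ok_mB' h; exact ok_mB h; exact ok_mA' h; exact ok_mA h]

lemma eB_mulL (x : Letter) {n : Raw} (h : Ok n.2) :
    eB (mulL x n) = eB n * evalLetter x := by
  rcases x with ⟨g, s⟩
  cases g <;> cases s <;>
    simp [mulL, evalLetter, gen, eB_mA, eB_mB, eB_mA' h, eB_mB' h]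

def nfRaw (w : List Letter) : Raw := w.foldl (fun n x => mulL x n) (0, [])

@[simp] lemma nfRaw_nil : nfRaw [] = (0, []) := rfl

lemma nfRaw_append (w : List Letter) (x : Letter) :
    nfRaw (w ++ [x]) = mulL x (nfRaw w) := by
  simp [nfRaw]

lemma ok_nfRaw (w : List Letter) : Ok (nfRaw w).2 := by
  induction w using List.reverseRecOn with
  | nil => simp
  | append_singleton w x ih => rw [nfRaw_append]; exact ok_mulL x ih

@[simp] lemma evalWord_nil : evalWord [] = 1 := rfl

lemma evalWord_append (v w : List Letter) : evalWord (v ++ w) = evalWord v * evalWord w := by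
  simp [evalWord]

lemma evalWord_eq_eB (w : List Letter) : evalWord w = eB (nfRaw w) := by
  induction w using List.reverseRecOn with
  | nil => simp [eB]
  | append_singleton w x ih =>
    rw [nfRaw_append, eB_mulL x (ok_nfRaw w), evalWord_append, ← ih]
    simp [evalWord]

/-! ### The action on normal forms: `evalWord` determines `nfRaw` -/

def NF := {n : Raw // Ok n.2}

def pA : Equiv.Perm NF where
  toFun n := ⟨mA n.1, ok_mA n.2⟩
  invFun n := ⟨mA' n.1, ok_mA' n.2⟩
  left_inv n := Subtype.ext (mA'_mA n.2)
  right_inv n := Subtype.ext (mA_mA' n.2)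

def pB : Equiv.Perm NF where
  toFun n := ⟨mB n.1, ok_mB n.2⟩
  invFun n := ⟨mB' n.1, ok_mB' n.2⟩
  left_inv n := Subtype.ext (mB'_mB n.2)
  right_inv n := Subtype.ext (mB_mB' n.2)

lemma perm_braid : pA * pB * pA = pB * pA * pB := by
  apply Equiv.ext
  intro n
  apply Subtype.ext
  show mA (mB (mA n.1)) = mB (mA (mB n.1))
  exact braid_m n.2

def φ : B3 →* (Equiv.Perm NF)ᵐᵒᵖ :=
  PresentedGroup.toGroup (f := fun x => MulOpposite.op (if x then pA else pB))
    (fun r hr => braidF r hr _ (by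
      simp only [if_true, if_false]
      apply MulOpposite.unop_injective
      simp only [MulOpposite.unop_mul, MulOpposite.unop_op]
      calc pA * (pB * pA) = pA * pB * pA := by rw [mul_assoc]
        _ = pB * pA * pB := perm_braid
        _ = pB * (pA * pB) := by rw [mul_assoc]))

@[simp] lemma φ_ga : φ ga = MulOpposite.op pA := PresentedGroup.toGroup.of _
@[simp] lemma φ_gb : φ gb = MulOpposite.op pB := PresentedGroup.toGroup.of _

def mulNF (x : Letter) (m : NF) : NF := ⟨mulL x m.1, ok_mulL x m.2⟩

lemma unop_letter (x : Letter) (m : NF) : (φ (evalLetter x)).unop m = mulNF x m := by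
  rcases x with ⟨g, s⟩
  cases g <;> cases s <;>
    simp [evalLetter, gen, map_inv, mulNF, mulL] <;> rfl

lemma unop_eval (w : List Letter) (m : NF) :
    (φ (evalWord w)).unop m = w.foldl (fun n x => mulNF x n) m := by
  induction w generalizing m with
  | nil => simp [evalWord]
  | cons x w ih =>
    have : evalWord (x :: w) = evalLetter x * evalWord w := by simp [evalWord]
    rw [this, map_mul]
    simp only [MulOpposite.unop_mul, Equiv.Perm.mul_apply, unop_letter, ih, List.foldl_cons]

lemma foldl_val (w : List Letter) (m : NF) :
    (w.foldl (fun n x => mulNF x n) m).1 = w.foldl (fun n x => mulL x n) m.1 := by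
  induction w generalizing m with
  | nil => rfl
  | cons x w ih =>
    simp only [List.foldl_cons]
    rw [ih]
    rfl

lemma nfRaw_eq_of_eval {v w : List Letter} (h : evalWord v = evalWord w) :
    nfRaw v = nfRaw w := by
  have base : Ok ((0, []) : Raw).2 := by simp
  have h2 := congrArg (fun g => ((φ g).unop ⟨(0, []), base⟩ : NF).1) h
  erw [unop_eval, unop_eval] at h2
  erw [foldl_val, foldl_val] at h2
  simpa only [unop_eval, foldl_val, nfRaw] using h2

/-! ### The length function -/

def w1 : S → ℤ | .a => 1 | .b => 1 | .ab => 0 | .ba => 0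
def w2 : S → ℤ | .a => 0 | .b => 0 | .ab => 1 | .ba => 1

def c1 (l : List S) : ℤ := (l.map w1).sum
def c2 (l : List S) : ℤ := (l.map w2).sum

@[simp] lemma c1_nil : c1 [] = 0 := rfl
@[simp] lemma c2_nil : c2 [] = 0 := rfl
@[simp] lemma c1_cons (x t) : c1 (x :: t) = w1 x + c1 t := by simp [c1]
@[simp] lemma c2_cons (x t) : c2 (x :: t) = w2 x + c2 t := by simp [c2]
@[simp] lemma c1_append (t s) : c1 (t ++ s) = c1 t + c1 s := by simp [c1]
@[simp] lemma c2_append (t s) : c2 (t ++ s) = c2 t + c2 s := by simp [c2]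
@[simp] lemma w1_τ (x : S) : w1 (τ x) = w1 x := by cases x <;> rfl
@[simp] lemma w2_τ (x : S) : w2 (τ x) = w2 x := by cases x <;> rfl
@[simp] lemma c1_map (l : List S) : c1 (l.map τ) = c1 l := by
  induction l with
  | nil => rfl
  | cons x t ih => simp [ih]
@[simp] lemma c2_map (l : List S) : c2 (l.map τ) = c2 l := by
  induction l with
  | nil => rfl
  | cons x t ih => simp [ih]

lemma c1_nonneg (l : List S) : 0 ≤ c1 l := by
  induction l with
  | nil => simp
  | cons x t ih => have : 0 ≤ w1 x := by cases x <;> simp [w1]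
                   simp only [c1_cons]; omega
lemma c2_nonneg (l : List S) : 0 ≤ c2 l := by
  induction l with
  | nil => simp
  | cons x t ih => have : 0 ≤ w2 x := by cases x <;> simp [w2]
                   simp only [c2_cons]; omega

lemma len_c (l : List S) : (l.length : ℤ) = c1 l + c2 l := by
  induction l with
  | nil => simp
  | cons x t ih =>
    have : w1 x + w2 x = 1 := by cases x <;> rfl
    simp only [List.length_cons, c1_cons, c2_cons]
    push_cast
    omega

def ℓf (k x y : ℤ) : ℤ :=
  max (max (3*k + x + 2*y) (k + x + 2*y)) (max (x - k) (-(3*k) - x - 2*y))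

def ell (n : Raw) : ℤ := ℓf n.1 (c1 n.2) (c2 n.2)

lemma lower_step (x : Letter) (n : Raw) : ell (mulL x n) ≤ ell n + 1 := by
  obtain ⟨k, l⟩ := n
  rcases x with ⟨g, s⟩
  cases g <;> cases s <;>
  · rcases l with _ | ⟨z, t⟩
    · simp only [mulL, mA, mB, mA', mB', ell, ℓf, c1_nil, c2_nil, c1_cons, c2_cons, w1, w2]
      omega
    · have h1 := c1_nonneg t
      have h2 := c2_nonneg t
      cases z <;>
        simp only [mulL, mA, mB, mA', mB', ell, ℓf, c1_nil, c2_nil, c1_cons, c2_cons,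
          c1_map, c2_map, w1, w2] <;>
        omega

lemma ell_nonneg (n : Raw) : 0 ≤ ell n := by
  obtain ⟨k, l⟩ := n
  simp only [ell, ℓf]
  omega

lemma lower (w : List Letter) : ell (nfRaw w) ≤ (w.length : ℤ) := by
  induction w using List.reverseRecOn with
  | nil => simp [nfRaw, ell, ℓf]
  | append_singleton w x ih =>
    rw [nfRaw_append]
    have := lower_step x (nfRaw w)
    simp only [List.length_append, List.length_cons, List.length_nil]
    push_cast
    omega

/-! ### Witness geodesic words -/

lemma P_append_singleton (t : List S) (x : S) : P (t ++ [x]) = sval x * P t := by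
  induction t with
  | nil => simp
  | cons y t ih => simp only [List.cons_append, P_cons, ih, mul_assoc]

lemma Δτ' (u : S) : Δ * sval u = sval (τ u) * Δ := by
  have h := Δτ (τ u)
  rwa [τ_τ] at h

lemma commΔ2_sval (s : S) : Δ * Δ * sval s = sval s * (Δ * Δ) := by
  calc Δ * Δ * sval s = Δ * (Δ * sval s) := by group
    _ = Δ * (sval (τ s) * Δ) := by rw [Δτ']
    _ = (Δ * sval (τ s)) * Δ := by group
    _ = sval s * Δ * Δ := by rw [Δτ]
    _ = sval s * (Δ * Δ) := by group

lemma zpow2_sval (m : ℤ) (s : S) : Δ ^ (2*m) * sval s = sval s * Δ ^ (2*m) := by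
  have hc : Commute (Δ * Δ) (sval s) := commΔ2_sval s
  have h2 : Δ ^ (2*m) = (Δ * Δ) ^ m := by
    rw [zpow_mul]
    norm_num [zpow_two, pow_two]
  rw [h2]
  exact (hc.zpow_left m).eq

def tw (k : ℤ) (s : S) : S := if Even k then s else τ s

@[simp] lemma w1_tw (k s) : w1 (tw k s) = w1 s := by unfold tw; split <;> simp
@[simp] lemma w2_tw (k s) : w2 (tw k s) = w2 s := by unfold tw; split <;> simp

lemma twist (k : ℤ) (s : S) : Δ ^ k * sval s = sval (tw k s) * Δ ^ k := by
  rcases Int.even_or_odd k with he | ho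
  · have hk : tw k s = s := by simp [tw, he]
    obtain ⟨m, hm⟩ := he
    have : k = 2 * m := by omega
    subst this
    rw [hk]
    exact zpow2_sval m s
  · have hne : ¬ Even k := by
      rw [Int.even_iff]; obtain ⟨m, hm⟩ := ho; omega
    have hk : tw k s = τ s := by simp [tw, hne]
    obtain ⟨m, hm⟩ := ho
    subst hm
    rw [hk]
    calc Δ ^ (2*m+1) * sval s = Δ ^ (2*m) * (Δ * sval s) := by rw [zpow_add_one]; group
      _ = Δ ^ (2*m) * (sval (τ s) * Δ) := by rw [Δτ']
      _ = (Δ ^ (2*m) * sval (τ s)) * Δ := by group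
      _ = (sval (τ s) * Δ ^ (2*m)) * Δ := by rw [zpow2_sval]
      _ = sval (τ s) * Δ ^ (2*m+1) := by rw [zpow_add_one]; group

lemma twist_inv (k : ℤ) (s : S) : Δ ^ k * (sval s)⁻¹ = (sval (tw k s))⁻¹ * Δ ^ k := by
  have h := twist k s
  calc Δ ^ k * (sval s)⁻¹
      = (sval (tw k s))⁻¹ * (sval (tw k s) * Δ ^ k) * (sval s)⁻¹ := by group
    _ = (sval (tw k s))⁻¹ * (Δ ^ k * sval s) * (sval s)⁻¹ := by rw [h]
    _ = (sval (tw k s))⁻¹ * Δ ^ k := by group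

def comp : S → S | .a => .ba | .b => .ab | .ab => .a | .ba => .b

lemma sval_comp (s : S) : sval s = Δ * (sval (comp s))⁻¹ := by
  cases s
  · show ga = Δ * (gb * ga)⁻¹
    rw [Δ]; group
  · show gb = Δ * (ga * gb)⁻¹
    rw [Δ, braid]; group
  · show ga * gb = Δ * ga⁻¹
    rw [Δ]; group
  · show gb * ga = Δ * gb⁻¹
    rw [Δ, braid]; group

@[simp] lemma w1_comp (s : S) : w1 (comp s) = w2 s := by cases s <;> rfl
@[simp] lemma w2_comp (s : S) : w2 (comp s) = w1 s := by cases s <;> rfl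

def lettersOf : S → List Letter
  | .a => [la] | .b => [lb] | .ab => [la, lb] | .ba => [lb, la]

@[simp] lemma evalWord_cons (x : Letter) (w : List Letter) :
    evalWord (x :: w) = evalLetter x * evalWord w := by simp [evalWord]

@[simp] lemma evalLetter_la : evalLetter la = ga := by simp [evalLetter, la, gen]
@[simp] lemma evalLetter_lb : evalLetter lb = gb := by simp [evalLetter, lb, gen]

lemma evalWord_lettersOf (s : S) : evalWord (lettersOf s) = sval s := by
  cases s <;> simp [lettersOf, sval, evalWord]

lemma len_lettersOf (s : S) : ((lettersOf s).length : ℤ) = w1 s + 2 * w2 s := by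
  cases s <;> simp [lettersOf, w1, w2]

def negL (x : Letter) : Letter := (x.1, !x.2)

lemma evalLetter_negL (x : Letter) : evalLetter (negL x) = (evalLetter x)⁻¹ := by
  rcases x with ⟨g, s⟩
  cases s <;> simp [negL, evalLetter]

def invWord (v : List Letter) : List Letter := (v.map negL).reverse

@[simp] lemma invWord_nil : invWord [] = [] := rfl
lemma invWord_cons (x v) : invWord (x :: v) = invWord v ++ [negL x] := by simp [invWord]

lemma evalWord_invWord (v : List Letter) : evalWord (invWord v) = (evalWord v)⁻¹ := by
  induction v with
  | nil => simp [evalWord]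
  | cons x v ih =>
    rw [invWord_cons, evalWord_append, ih, evalWord_cons]
    simp [evalWord, evalLetter_negL]

@[simp] lemma len_invWord (v : List Letter) : (invWord v).length = v.length := by
  simp [invWord]

def Dp : List Letter := [la, lb, la]

lemma evalWord_Dp : evalWord Dp = Δ := by simp [Dp, evalWord, Δ, mul_assoc]

def repD : ℕ → List Letter
  | 0 => []
  | m+1 => Dp ++ repD m

lemma evalWord_repD (m : ℕ) : evalWord (repD m) = Δ ^ m := by
  induction m with
  | zero => simp [repD, evalWord]
  | succ m ih => rw [repD, evalWord_append, ih, evalWord_Dp, pow_succ']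

lemma len_repD (m : ℕ) : (repD m).length = 3 * m := by
  induction m with
  | zero => rfl
  | succ m ih => simp [repD, Dp, ih]; omega

def posW : List S → List Letter
  | [] => []
  | x :: t => posW t ++ lettersOf x

lemma evalWord_posW (l : List S) : evalWord (posW l) = P l := by
  induction l with
  | nil => simp [posW, evalWord]
  | cons x t ih => rw [posW, evalWord_append, ih, evalWord_lettersOf, P_cons]

lemma len_posW (l : List S) : ((posW l).length : ℤ) = c1 l + 2 * c2 l := by
  induction l with
  | nil => simp [posW]
  | cons x t ih =>
    rw [posW, List.length_append]
    push_cast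
    rw [ih, len_lettersOf]
    simp only [c1_cons, c2_cons]
    ring

lemma witness_pos (l : List S) (k : ℤ) (hk : 0 ≤ k) :
    ∃ v, evalWord v = eB (k, l) ∧ (v.length : ℤ) ≤ ell (k, l) := by
  refine ⟨repD k.toNat ++ posW l, ?_, ?_⟩
  · rw [evalWord_append, evalWord_repD, evalWord_posW, eB]
    congr 1
    rw [← zpow_natCast, Int.toNat_of_nonneg hk]
  · rw [List.length_append]
    push_cast
    rw [len_posW, len_repD]
    have h1 := c1_nonneg l
    have h2 := c2_nonneg l
    simp only [ell, ℓf]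
    push_cast
    omega

lemma witness (l : List S) : ∀ k : ℤ, ∃ v, evalWord v = eB (k, l) ∧ (v.length : ℤ) ≤ ell (k, l) := by
  induction l using List.reverseRecOn with
  | nil =>
    intro k
    rcases le_or_gt 0 k with hk | hk
    · exact witness_pos [] k hk
    · refine ⟨invWord (repD (-k).toNat), ?_, ?_⟩
      · rw [evalWord_invWord, evalWord_repD, eB]
        simp only [P_nil, mul_one]
        rw [← zpow_natCast, ← zpow_neg]
        congr 1
        omega
      · rw [len_invWord, len_repD]
        simp only [ell, ℓf, c1_nil, c2_nil]
        push_cast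
        omega
  | append_singleton t s ih =>
    intro k
    rcases le_or_gt 0 k with hk | hk
    · exact witness_pos _ k hk
    · have hn1 := c1_nonneg t
      have hn2 := c2_nonneg t
      have hw : w1 s + w2 s = 1 ∧ 0 ≤ w1 s ∧ 0 ≤ w2 s := by cases s <;> simp [w1, w2]
      have hc : (w1 s + 2*w2 s) + ℓf k (c1 t) (c2 t) ≤ ℓf k (c1 t + w1 s) (c2 t + w2 s)
          ∨ (3 - (w1 s + 2*w2 s)) + ℓf (k+1) (c1 t) (c2 t) ≤ ℓf k (c1 t + w1 s) (c2 t + w2 s) := by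
        simp only [ℓf]
        omega
      have hell : ell (k, t ++ [s]) = ℓf k (c1 t + w1 s) (c2 t + w2 s) := by
        simp [ell]
      rcases hc with hc | hc
      · obtain ⟨v1, hv1, hl1⟩ := ih k
        refine ⟨lettersOf (tw k s) ++ v1, ?_, ?_⟩
        · rw [evalWord_append, evalWord_lettersOf, hv1]
          simp only [eB, P_append_singleton]
          rw [← mul_assoc, ← twist, mul_assoc]
        · rw [List.length_append, hell]
          push_cast
          rw [len_lettersOf, w1_tw, w2_tw]
          simp only [ell] at hl1
          omega
      · obtain ⟨v2, hv2, hl2⟩ := ih (k+1)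
        refine ⟨invWord (lettersOf (tw (k+1) (comp s))) ++ v2, ?_, ?_⟩
        · rw [evalWord_append, evalWord_invWord, evalWord_lettersOf, hv2]
          simp only [eB, P_append_singleton]
          rw [← mul_assoc, ← twist_inv]
          have key : Δ^(k+1) * (sval (comp s))⁻¹ = Δ^k * sval s := by
            rw [zpow_add_one, mul_assoc, ← sval_comp]
          rw [key, mul_assoc]
        · rw [List.length_append, len_invWord, hell]
          push_cast
          rw [len_lettersOf, w1_tw, w2_tw, w1_comp, w2_comp]
          simp only [ell] at hl2
          omega

/-! ### Geodesics are characterised by the length function -/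

def Geo (w : List Letter) : Prop := (w.length : ℤ) = ell (nfRaw w)

lemma isGeodesic_iff (w : List Letter) : IsGeodesic w ↔ Geo w := by
  constructor
  · intro h
    obtain ⟨v, hv, hl⟩ := witness (nfRaw w).2 (nfRaw w).1
    have hl' : (v.length : ℤ) ≤ ell (nfRaw w) := hl
    have h1 : evalWord v = evalWord w := by
      rw [hv, evalWord_eq_eB w]
    have h2 := h v h1
    have h3 := lower w
    unfold Geo
    omega
  · intro hg v hv
    have he := nfRaw_eq_of_eval hv
    have h3 := lower v
    rw [he] at h3
    unfold Geo at hg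
    omega

/-! ### The automaton -/

inductive Sg : Type | lt | eq | gt deriving DecidableEq

instance : Fintype Sg := ⟨{.lt, .eq, .gt}, by intro x; cases x <;> decide⟩

def sg (x : ℤ) : Sg := if x < 0 then .lt else if x = 0 then .eq else .gt

inductive St : Type
  | sink | pos | neg
  | mix (c1 : Bool) (c2 : Sg) (c3 : Bool) (h : Option S)
deriving DecidableEq, Fintype

def stepMix (c1 : Bool) (c2 : Sg) (c3 : Bool) (h : Option S) (x : Letter) : St :=
  match x, h with
  | (true, true), none => .mix c1 c2 false (some .a)
  | (true, true), some .a => .mix c1 c2 false (some .a)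
  | (true, true), some .ba => .mix c1 c2 false (some .a)
  | (true, true), some .b => if c2 ≠ .lt then .mix c1 .gt c3 (some .ba) else .sink
  | (true, true), some .ab => if c1 then .pos else .sink
  | (false, true), none => .mix c1 c2 false (some .b)
  | (false, true), some .b => .mix c1 c2 false (some .b)
  | (false, true), some .ab => .mix c1 c2 false (some .b)
  | (false, true), some .a => if c2 ≠ .lt then .mix c1 .gt c3 (some .ab) else .sink
  | (false, true), some .ba => if c1 then .pos else .sink
  | (true, false), some .a => if c3 then .neg else .sink
  | (true, false), some .ba => if c2 ≠ .gt then .mix c1 .lt c3 (some .b) else .sink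
  | (true, false), _ => .mix false c2 c3 (some .ab)
  | (false, false), some .b => if c3 then .neg else .sink
  | (false, false), some .ab => if c2 ≠ .gt then .mix c1 .lt c3 (some .a) else .sink
  | (false, false), _ => .mix false c2 c3 (some .ba)

def dstep : St → Letter → St
  | .sink, _ => .sink
  | .pos, x => if x.2 then .pos else .sink
  | .neg, x => if x.2 then .sink else .neg
  | .mix c1 c2 c3 h, x => stepMix c1 c2 c3 h x

def α (n : Raw) : St :=
  if 1 ≤ n.1 then .pos
  else if n.1 + n.2.length ≤ -1 then .neg
  else .mix (if n.1 = 0 then true else false) (sg (n.1 + c2 n.2))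
    (if n.1 + (n.2.length : ℤ) = 0 then true else false) n.2.head?

lemma α_ne_sink (n : Raw) : α n ≠ .sink := by
  unfold α; split_ifs <;> simp

set_option maxHeartbeats 0 in
lemma step_pos_tt (n : Raw) (hc : ell (mulL (true, true) n) = ell n + 1) :
    dstep (α n) (true, true) = α (mulL (true, true) n) := by
  obtain ⟨k, l⟩ := n
  rcases l with _ | ⟨z, t⟩
  · simp only [mulL, mA, mB, mA', mB', ell, ℓf, c1_nil, c2_nil, c1_cons, c2_cons,
      w1, w2] at hc
    simp only [mulL, mA, mB, mA', mB', α, dstep, stepMix, sg, List.head?_nil,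
      List.head?_cons, List.length_nil, List.length_cons, c1_nil, c2_nil, c1_cons, c2_cons,
      w1, w2, Nat.cast_zero, Nat.cast_add, Nat.cast_one]
    split_ifs <;> first | rfl | omega | (simp only [] at *; simp only [*, ↓reduceIte]; first | rfl | omega | (split_ifs <;> first | rfl | omega | simp_all))
  · have h1 := c1_nonneg t
    have h2 := c2_nonneg t
    have h3 := len_c t
    cases z <;>
      (simp only [mulL, mA, mB, mA', mB', ell, ℓf, c1_nil, c2_nil, c1_cons, c2_cons,
         c1_map, c2_map, w1, w2] at hc
       simp only [mulL, mA, mB, mA', mB', α, dstep, stepMix, sg, List.head?_nil,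
         List.head?_cons, List.length_nil, List.length_cons, List.length_map, c1_nil, c2_nil,
         c1_cons, c2_cons, c1_map, c2_map, w1, w2, Nat.cast_zero, Nat.cast_add, Nat.cast_one]
       split_ifs <;> first | rfl | omega | (simp only [] at *; simp only [*, ↓reduceIte]; first | rfl | omega | (split_ifs <;> first | rfl | omega | simp_all)))

set_option maxHeartbeats 0 in
lemma step_neg_tt (n : Raw) (hc : ¬ ell (mulL (true, true) n) = ell n + 1) :
    dstep (α n) (true, true) = (.sink : St) := by
  obtain ⟨k, l⟩ := n
  rcases l with _ | ⟨z, t⟩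
  · simp only [mulL, mA, mB, mA', mB', ell, ℓf, c1_nil, c2_nil, c1_cons, c2_cons,
      w1, w2] at hc
    simp only [mulL, mA, mB, mA', mB', α, dstep, stepMix, sg, List.head?_nil,
      List.head?_cons, List.length_nil, List.length_cons, c1_nil, c2_nil, c1_cons, c2_cons,
      w1, w2, Nat.cast_zero, Nat.cast_add, Nat.cast_one]
    split_ifs <;> first | rfl | omega | (simp only [] at *; simp only [*, ↓reduceIte]; first | rfl | omega | (split_ifs <;> first | rfl | omega | simp_all))
  · have h1 := c1_nonneg t
    have h2 := c2_nonneg t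
    have h3 := len_c t
    cases z <;>
      (simp only [mulL, mA, mB, mA', mB', ell, ℓf, c1_nil, c2_nil, c1_cons, c2_cons,
         c1_map, c2_map, w1, w2] at hc
       simp only [mulL, mA, mB, mA', mB', α, dstep, stepMix, sg, List.head?_nil,
         List.head?_cons, List.length_nil, List.length_cons, List.length_map, c1_nil, c2_nil,
         c1_cons, c2_cons, c1_map, c2_map, w1, w2, Nat.cast_zero, Nat.cast_add, Nat.cast_one]
       split_ifs <;> first | rfl | omega | (simp only [] at *; simp only [*, ↓reduceIte]; first | rfl | omega | (split_ifs <;> first | rfl | omega | simp_all)))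

set_option maxHeartbeats 0 in
lemma step_pos_ft (n : Raw) (hc : ell (mulL (false, true) n) = ell n + 1) :
    dstep (α n) (false, true) = α (mulL (false, true) n) := by
  obtain ⟨k, l⟩ := n
  rcases l with _ | ⟨z, t⟩
  · simp only [mulL, mA, mB, mA', mB', ell, ℓf, c1_nil, c2_nil, c1_cons, c2_cons,
      w1, w2] at hc
    simp only [mulL, mA, mB, mA', mB', α, dstep, stepMix, sg, List.head?_nil,
      List.head?_cons, List.length_nil, List.length_cons, c1_nil, c2_nil, c1_cons, c2_cons,
      w1, w2, Nat.cast_zero, Nat.cast_add, Nat.cast_one]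
    split_ifs <;> first | rfl | omega | (simp only [] at *; simp only [*, ↓reduceIte]; first | rfl | omega | (split_ifs <;> first | rfl | omega | simp_all))
  · have h1 := c1_nonneg t
    have h2 := c2_nonneg t
    have h3 := len_c t
    cases z <;>
      (simp only [mulL, mA, mB, mA', mB', ell, ℓf, c1_nil, c2_nil, c1_cons, c2_cons,
         c1_map, c2_map, w1, w2] at hc
       simp only [mulL, mA, mB, mA', mB', α, dstep, stepMix, sg, List.head?_nil,
         List.head?_cons, List.length_nil, List.length_cons, List.length_map, c1_nil, c2_nil,
         c1_cons, c2_cons, c1_map, c2_map, w1, w2, Nat.cast_zero, Nat.cast_add, Nat.cast_one]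
       split_ifs <;> first | rfl | omega | (simp only [] at *; simp only [*, ↓reduceIte]; first | rfl | omega | (split_ifs <;> first | rfl | omega | simp_all)))

set_option maxHeartbeats 0 in
lemma step_neg_ft (n : Raw) (hc : ¬ ell (mulL (false, true) n) = ell n + 1) :
    dstep (α n) (false, true) = (.sink : St) := by
  obtain ⟨k, l⟩ := n
  rcases l with _ | ⟨z, t⟩
  · simp only [mulL, mA, mB, mA', mB', ell, ℓf, c1_nil, c2_nil, c1_cons, c2_cons,
      w1, w2] at hc
    simp only [mulL, mA, mB, mA', mB', α, dstep, stepMix, sg, List.head?_nil,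
      List.head?_cons, List.length_nil, List.length_cons, c1_nil, c2_nil, c1_cons, c2_cons,
      w1, w2, Nat.cast_zero, Nat.cast_add, Nat.cast_one]
    split_ifs <;> first | rfl | omega | (simp only [] at *; simp only [*, ↓reduceIte]; first | rfl | omega | (split_ifs <;> first | rfl | omega | simp_all))
  · have h1 := c1_nonneg t
    have h2 := c2_nonneg t
    have h3 := len_c t
    cases z <;>
      (simp only [mulL, mA, mB, mA', mB', ell, ℓf, c1_nil, c2_nil, c1_cons, c2_cons,
         c1_map, c2_map, w1, w2] at hc
       simp only [mulL, mA, mB, mA', mB', α, dstep, stepMix, sg, List.head?_nil,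
         List.head?_cons, List.length_nil, List.length_cons, List.length_map, c1_nil, c2_nil,
         c1_cons, c2_cons, c1_map, c2_map, w1, w2, Nat.cast_zero, Nat.cast_add, Nat.cast_one]
       split_ifs <;> first | rfl | omega | (simp only [] at *; simp only [*, ↓reduceIte]; first | rfl | omega | (split_ifs <;> first | rfl | omega | simp_all)))

set_option maxHeartbeats 0 in
lemma step_pos_tf (n : Raw) (hc : ell (mulL (true, false) n) = ell n + 1) :
    dstep (α n) (true, false) = α (mulL (true, false) n) := by
  obtain ⟨k, l⟩ := n
  rcases l with _ | ⟨z, t⟩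
  · simp only [mulL, mA, mB, mA', mB', ell, ℓf, c1_nil, c2_nil, c1_cons, c2_cons,
      w1, w2] at hc
    simp only [mulL, mA, mB, mA', mB', α, dstep, stepMix, sg, List.head?_nil,
      List.head?_cons, List.length_nil, List.length_cons, c1_nil, c2_nil, c1_cons, c2_cons,
      w1, w2, Nat.cast_zero, Nat.cast_add, Nat.cast_one]
    split_ifs <;> first | rfl | omega | (simp only [] at *; simp only [*, ↓reduceIte]; first | rfl | omega | (split_ifs <;> first | rfl | omega | simp_all))
  · have h1 := c1_nonneg t
    have h2 := c2_nonneg t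
    have h3 := len_c t
    cases z <;>
      (simp only [mulL, mA, mB, mA', mB', ell, ℓf, c1_nil, c2_nil, c1_cons, c2_cons,
         c1_map, c2_map, w1, w2] at hc
       simp only [mulL, mA, mB, mA', mB', α, dstep, stepMix, sg, List.head?_nil,
         List.head?_cons, List.length_nil, List.length_cons, List.length_map, c1_nil, c2_nil,
         c1_cons, c2_cons, c1_map, c2_map, w1, w2, Nat.cast_zero, Nat.cast_add, Nat.cast_one]
       split_ifs <;> first | rfl | omega | (simp only [] at *; simp only [*, ↓reduceIte]; first | rfl | omega | (split_ifs <;> first | rfl | omega | simp_all)))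

set_option maxHeartbeats 0 in
lemma step_neg_tf (n : Raw) (hc : ¬ ell (mulL (true, false) n) = ell n + 1) :
    dstep (α n) (true, false) = (.sink : St) := by
  obtain ⟨k, l⟩ := n
  rcases l with _ | ⟨z, t⟩
  · simp only [mulL, mA, mB, mA', mB', ell, ℓf, c1_nil, c2_nil, c1_cons, c2_cons,
      w1, w2] at hc
    simp only [mulL, mA, mB, mA', mB', α, dstep, stepMix, sg, List.head?_nil,
      List.head?_cons, List.length_nil, List.length_cons, c1_nil, c2_nil, c1_cons, c2_cons,
      w1, w2, Nat.cast_zero, Nat.cast_add, Nat.cast_one]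
    split_ifs <;> first | rfl | omega | (simp only [] at *; simp only [*, ↓reduceIte]; first | rfl | omega | (split_ifs <;> first | rfl | omega | simp_all))
  · have h1 := c1_nonneg t
    have h2 := c2_nonneg t
    have h3 := len_c t
    cases z <;>
      (simp only [mulL, mA, mB, mA', mB', ell, ℓf, c1_nil, c2_nil, c1_cons, c2_cons,
         c1_map, c2_map, w1, w2] at hc
       simp only [mulL, mA, mB, mA', mB', α, dstep, stepMix, sg, List.head?_nil,
         List.head?_cons, List.length_nil, List.length_cons, List.length_map, c1_nil, c2_nil,
         c1_cons, c2_cons, c1_map, c2_map, w1, w2, Nat.cast_zero, Nat.cast_add, Nat.cast_one]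
       split_ifs <;> first | rfl | omega | (simp only [] at *; simp only [*, ↓reduceIte]; first | rfl | omega | (split_ifs <;> first | rfl | omega | simp_all)))

set_option maxHeartbeats 0 in
lemma step_pos_ff (n : Raw) (hc : ell (mulL (false, false) n) = ell n + 1) :
    dstep (α n) (false, false) = α (mulL (false, false) n) := by
  obtain ⟨k, l⟩ := n
  rcases l with _ | ⟨z, t⟩
  · simp only [mulL, mA, mB, mA', mB', ell, ℓf, c1_nil, c2_nil, c1_cons, c2_cons,
      w1, w2] at hc
    simp only [mulL, mA, mB, mA', mB', α, dstep, stepMix, sg, List.head?_nil,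
      List.head?_cons, List.length_nil, List.length_cons, c1_nil, c2_nil, c1_cons, c2_cons,
      w1, w2, Nat.cast_zero, Nat.cast_add, Nat.cast_one]
    split_ifs <;> first | rfl | omega | (simp only [] at *; simp only [*, ↓reduceIte]; first | rfl | omega | (split_ifs <;> first | rfl | omega | simp_all))
  · have h1 := c1_nonneg t
    have h2 := c2_nonneg t
    have h3 := len_c t
    cases z <;>
      (simp only [mulL, mA, mB, mA', mB', ell, ℓf, c1_nil, c2_nil, c1_cons, c2_cons,
         c1_map, c2_map, w1, w2] at hc
       simp only [mulL, mA, mB, mA', mB', α, dstep, stepMix, sg, List.head?_nil,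
         List.head?_cons, List.length_nil, List.length_cons, List.length_map, c1_nil, c2_nil,
         c1_cons, c2_cons, c1_map, c2_map, w1, w2, Nat.cast_zero, Nat.cast_add, Nat.cast_one]
       split_ifs <;> first | rfl | omega | (simp only [] at *; simp only [*, ↓reduceIte]; first | rfl | omega | (split_ifs <;> first | rfl | omega | simp_all)))

set_option maxHeartbeats 0 in
lemma step_neg_ff (n : Raw) (hc : ¬ ell (mulL (false, false) n) = ell n + 1) :
    dstep (α n) (false, false) = (.sink : St) := by
  obtain ⟨k, l⟩ := n
  rcases l with _ | ⟨z, t⟩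
  · simp only [mulL, mA, mB, mA', mB', ell, ℓf, c1_nil, c2_nil, c1_cons, c2_cons,
      w1, w2] at hc
    simp only [mulL, mA, mB, mA', mB', α, dstep, stepMix, sg, List.head?_nil,
      List.head?_cons, List.length_nil, List.length_cons, c1_nil, c2_nil, c1_cons, c2_cons,
      w1, w2, Nat.cast_zero, Nat.cast_add, Nat.cast_one]
    split_ifs <;> first | rfl | omega | (simp only [] at *; simp only [*, ↓reduceIte]; first | rfl | omega | (split_ifs <;> first | rfl | omega | simp_all))
  · have h1 := c1_nonneg t
    have h2 := c2_nonneg t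
    have h3 := len_c t
    cases z <;>
      (simp only [mulL, mA, mB, mA', mB', ell, ℓf, c1_nil, c2_nil, c1_cons, c2_cons,
         c1_map, c2_map, w1, w2] at hc
       simp only [mulL, mA, mB, mA', mB', α, dstep, stepMix, sg, List.head?_nil,
         List.head?_cons, List.length_nil, List.length_cons, List.length_map, c1_nil, c2_nil,
         c1_cons, c2_cons, c1_map, c2_map, w1, w2, Nat.cast_zero, Nat.cast_add, Nat.cast_one]
       split_ifs <;> first | rfl | omega | (simp only [] at *; simp only [*, ↓reduceIte]; first | rfl | omega | (split_ifs <;> first | rfl | omega | simp_all)))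

lemma main_step_pos (x : Letter) (n : Raw) (hc : ell (mulL x n) = ell n + 1) :
    dstep (α n) x = α (mulL x n) := by
  rcases x with ⟨g, s⟩
  cases g <;> cases s
  exacts [step_pos_ff n hc, step_pos_ft n hc, step_pos_tf n hc, step_pos_tt n hc]

lemma main_step_neg (x : Letter) (n : Raw) (hc : ¬ ell (mulL x n) = ell n + 1) :
    dstep (α n) x = .sink := by
  rcases x with ⟨g, s⟩
  cases g <;> cases s
  exacts [step_neg_ff n hc, step_neg_ft n hc, step_neg_tf n hc, step_neg_tt n hc]

def Mdfa : DFA Letter St := { step := dstep, start := α (0, []), accept := {s | s ≠ .sink} }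

lemma geo_nil : Geo [] := by
  simp [Geo, nfRaw, ell, ℓf]

lemma dfa_inv (w : List Letter) :
    (Geo w → Mdfa.eval w = α (nfRaw w)) ∧ (¬ Geo w → Mdfa.eval w = .sink) := by
  induction w using List.reverseRecOn with
  | nil => exact ⟨fun _ => rfl, fun h => absurd geo_nil h⟩
  | append_singleton w x ih =>
    rw [DFA.eval_append_singleton]
    have hlen : ((w ++ [x]).length : ℤ) = (w.length : ℤ) + 1 := by simp
    by_cases hw : Geo w
    · rw [ih.1 hw]
      have hstep : Mdfa.step (α (nfRaw w)) x = dstep (α (nfRaw w)) x := rfl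
      rw [hstep]
      constructor
      · intro hwx
        unfold Geo at hw hwx
        rw [nfRaw_append] at hwx ⊢
        exact main_step_pos x (nfRaw w) (by omega)
      · intro hnx
        unfold Geo at hw hnx
        rw [nfRaw_append] at hnx
        exact main_step_neg x (nfRaw w) (by omega)
    · rw [ih.2 hw]
      refine ⟨fun h => ?_, fun _ => rfl⟩
      exfalso
      have l1 := lower w
      have l2 := lower_step x (nfRaw w)
      unfold Geo at h hw
      rw [nfRaw_append] at h
      omega

end B3NF

theorem stmt8 : Language.IsRegular ({w : List Letter | IsGeodesic w} : Language Letter) := by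
  refine ⟨B3NF.St, inferInstance, B3NF.Mdfa, ?_⟩
  ext w
  rw [DFA.mem_accepts]
  have hacc : (B3NF.Mdfa.eval w ∈ B3NF.Mdfa.accept) ↔ ¬ B3NF.Mdfa.eval w = B3NF.St.sink :=
    Iff.rfl
  have hmem : (w ∈ ({w : List Letter | IsGeodesic w} : Language Letter)) ↔ IsGeodesic w :=
    Iff.rfl
  rw [hacc]
  refine Iff.trans ?_ hmem.symm
  rw [B3NF.isGeodesic_iff]
  by_cases hw : B3NF.Geo w
  · rw [(B3NF.dfa_inv w).1 hw]
    simp [B3NF.α_ne_sink, hw]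
  · rw [(B3NF.dfa_inv w).2 hw]
    simp [hw]
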